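/- Let q ≥ 4 be a power of 2, let m ≥ 2 be an integer, n = q^m − 1, and let β be a primitive element of F_{q^m}. Then the cyclic code of length 2n over F_q with generator polynomial (x−1)^2 m_β(x) has dimension 2(q^m − 1) − m − 2 and minimum distance exactly 3; moreover, this code is distance-optimal. -/

import Mathlib

open Polynomial

/-- The cyclic code of length `N` over the field `F` generated by the polynomial `g`.
Codewords are identified with the representatives of degree `< N` of the elements of the
ideal generated by `g` in `F[x]/(x^N - 1)`; equivalently, a polynomial `c` of degree `< N`
is a codeword iff `c ∈ (g, x^N - 1)` as an ideal of `F[x]`. -/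
noncomputable def cyclicCode (F : Type*) [Field F] (N : ℕ) (g : Polynomial F) :
    Submodule F (Polynomial F) :=
  Polynomial.degreeLT F N ⊓
    Submodule.restrictScalars F (Ideal.span ({g, Polynomial.X ^ N - 1} : Set (Polynomial F)))

/-- The minimum distance (equivalently, the minimum Hamming weight of a nonzero codeword,
a codeword being identified with its coefficient vector) of a linear code of polynomials. -/
noncomputable def minDist {F : Type*} [Field F] (C : Submodule F (Polynomial F)) : ℕ :=
  sInf {w | ∃ c ∈ C, c ≠ 0 ∧ c.support.card = w}

/-- The minimum Hamming distance of an arbitrary (not necessarily linear) code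
`D ⊆ F^N`. -/
noncomputable def setMinDist {F : Type*} {N : ℕ} (D : Set (Fin N → F)) : ℕ :=
  letI := Classical.decEq F
  sInf {w | ∃ u ∈ D, ∃ v ∈ D, u ≠ v ∧ hammingDist u v = w}

section Helpers

variable {F K : Type*} [Field F] [Field K] [Algebra F K]

theorem mem_cyclicCode {N : ℕ} {g : Polynomial F} (hg : g ∣ X ^ N - 1) {c : Polynomial F} :
    c ∈ cyclicCode F N g ↔ c.degree < N ∧ g ∣ c := by
  have hspan : Ideal.span ({g, X ^ N - 1} : Set (Polynomial F)) = Ideal.span {g} := by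
    apply le_antisymm
    · rw [Ideal.span_le]
      rintro p (rfl | hp)
      · exact Ideal.subset_span rfl
      · simp only [Set.mem_singleton_iff] at hp
        subst hp
        exact Ideal.mem_span_singleton.2 hg
    · exact Ideal.span_mono (by simp)
  simp [cyclicCode, hspan, Polynomial.mem_degreeLT, Ideal.mem_span_singleton]

theorem cyclicCode_equiv {N : ℕ} {g : Polynomial F} (hg : g ∣ X ^ N - 1) (hg0 : g ≠ 0)
    (hdeg : g.natDegree ≤ N) :
    Nonempty ((Polynomial.degreeLT F (N - g.natDegree)) ≃ₗ[F] cyclicCode F N g) := by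
  set k := N - g.natDegree with hk
  let φ : Polynomial.degreeLT F k →ₗ[F] Polynomial F :=
    (LinearMap.mulLeft F g).comp (Polynomial.degreeLT F k).subtype
  have hinj : Function.Injective φ := by
    intro p1 p2 h
    have : g * (p1 : Polynomial F) = g * (p2 : Polynomial F) := h
    exact Subtype.ext (mul_left_cancel₀ hg0 this)
  have hrange : LinearMap.range φ = cyclicCode F N g := by
    ext c
    rw [mem_cyclicCode hg]
    constructor
    · rintro ⟨⟨p, hp⟩, rfl⟩
      rw [Polynomial.mem_degreeLT] at hp
      refine ⟨?_, Dvd.intro _ rfl⟩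
      show (g * p).degree < N
      rcases eq_or_ne p 0 with rfl | hp0
      · simp only [mul_zero, Polynomial.degree_zero]
        exact_mod_cast WithBot.bot_lt_coe N
      · rw [Polynomial.degree_mul, Polynomial.degree_eq_natDegree hg0,
          Polynomial.degree_eq_natDegree hp0] at *
        have hpk : p.natDegree < k := by exact_mod_cast hp
        have : g.natDegree + p.natDegree < N := by omega
        exact_mod_cast this
    · rintro ⟨hdc, p, rfl⟩
      have hp : p ∈ Polynomial.degreeLT F k := by
        rw [Polynomial.mem_degreeLT]
        rcases eq_or_ne p 0 with rfl | hp0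
        · simp only [Polynomial.degree_zero]
          exact_mod_cast WithBot.bot_lt_coe k
        · rw [Polynomial.degree_mul, Polynomial.degree_eq_natDegree hg0,
            Polynomial.degree_eq_natDegree hp0] at hdc
          have : (g.natDegree + p.natDegree : ℕ) < N := by exact_mod_cast hdc
          have h2 : p.natDegree < k := by omega
          rw [Polynomial.degree_eq_natDegree hp0]
          exact_mod_cast h2
      exact ⟨⟨p, hp⟩, rfl⟩
  exact ⟨(LinearEquiv.ofInjective φ hinj).trans (LinearEquiv.ofEq _ _ hrange)⟩

theorem finrank_cyclicCode {N : ℕ} {g : Polynomial F} (hg : g ∣ X ^ N - 1) (hg0 : g ≠ 0)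
    (hdeg : g.natDegree ≤ N) :
    Module.finrank F (cyclicCode F N g) = N - g.natDegree := by
  obtain ⟨e1⟩ := cyclicCode_equiv hg hg0 hdeg
  rw [← e1.finrank_eq]
  rw [(Polynomial.degreeLTEquiv F _).finrank_eq, Module.finrank_fin_fun]

theorem card_cyclicCode [Fintype F] {N : ℕ} {g : Polynomial F} (hg : g ∣ X ^ N - 1)
    (hg0 : g ≠ 0) (hdeg : g.natDegree ≤ N) :
    Nat.card (cyclicCode F N g) = Fintype.card F ^ (N - g.natDegree) := by
  obtain ⟨e1⟩ := cyclicCode_equiv hg hg0 hdeg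
  rw [← Nat.card_congr e1.toEquiv]
  rw [Nat.card_congr (Polynomial.degreeLTEquiv F _).toEquiv]
  rw [Nat.card_eq_fintype_card, Fintype.card_fun, Fintype.card_fin]

theorem pow_surj_of_primitive [Fintype K] {β : K} {n : ℕ} (hn : 0 < n)
    (hcard : Fintype.card K - 1 = n)
    (hβ : IsPrimitiveRoot β n) (x : K) (hx : x ≠ 0) : ∃ i, i < n ∧ β ^ i = x := by
  have hβu : IsUnit β := hβ.isUnit hn.ne'
  set u := hβu.unit with hu
  have hβu' : IsPrimitiveRoot u n := hβ.isUnit_unit hn.ne'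
  have horder : orderOf u = n := hβu'.eq_orderOf.symm
  have horderβ : orderOf β = n := hβ.eq_orderOf.symm
  have htop : Subgroup.zpowers u = ⊤ := by
    apply Subgroup.eq_top_of_card_eq
    rw [Nat.card_zpowers, horder, Nat.card_units, Nat.card_eq_fintype_card, hcard]
  have hxu : IsUnit x := isUnit_iff_ne_zero.2 hx
  have : hxu.unit ∈ Submonoid.powers u := by
    rw [mem_powers_iff_mem_zpowers, htop]; trivial
  obtain ⟨i, hi⟩ := this
  refine ⟨i % n, Nat.mod_lt _ hn, ?_⟩
  have hix : β ^ i = x := by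
    have := congrArg (Units.val) hi
    simpa [hu] using this
  rw [← hix, ← horderβ, pow_mod_orderOf]

theorem gdvd [CharP F 2] {β : K} {n : ℕ}
    (hβ : IsPrimitiveRoot β n) (hint : IsIntegral F β) (hm2 : 2 ≤ (minpoly F β).natDegree) :
    ((X : Polynomial F) - 1) ^ 2 * minpoly F β ∣ X ^ (2 * n) - 1 := by
  have hprime : Prime (minpoly F β) :=
    (minpoly.irreducible hint).prime
  have hX1 : (X : Polynomial F) - 1 ∣ X ^ n - 1 := by
    have : IsRoot ((X : Polynomial F) ^ n - 1) 1 := by simp [IsRoot]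
    simpa using (dvd_iff_isRoot.2 this)
  obtain ⟨h, hh⟩ := hX1
  have hmdvd : minpoly F β ∣ (X : Polynomial F) ^ n - 1 := by
    apply minpoly.dvd
    simp [hβ.pow_eq_one]
  have hmh : minpoly F β ∣ h := by
    rw [hh] at hmdvd
    rcases hprime.2.2 _ _ hmdvd with h1 | h2
    · exfalso
      have hne : (X - 1 : Polynomial F) ≠ 0 := by
        simpa using Polynomial.X_sub_C_ne_zero (1 : F)
      have hle : (minpoly F β).natDegree ≤ (X - 1 : Polynomial F).natDegree :=
        Polynomial.natDegree_le_of_dvd h1 hne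
      have hd1 : (X - 1 : Polynomial F).natDegree = 1 := by
        simpa using Polynomial.natDegree_X_sub_C (1 : F)
      omega
    · exact h2
  have hsq : (X : Polynomial F) ^ (2 * n) - 1 = ((X : Polynomial F) ^ n - 1) ^ 2 := by
    rw [sub_pow_char, one_pow, ← pow_mul, mul_comm n 2]
  rw [hsq, hh, mul_pow]
  exact mul_dvd_mul_left _ (hmh.trans (dvd_pow_self h two_ne_zero))

theorem weight_lb [CharP F 2] [CharP K 2] {β : K} {n : ℕ}
    (hn0 : 0 < n) (hnodd : ¬ 2 ∣ n) (hβ : IsPrimitiveRoot β n)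
    (hdvd : ((X : Polynomial F) - 1) ^ 2 * minpoly F β ∣ X ^ (2 * n) - 1)
    {c : Polynomial F} (hcC : c ∈ cyclicCode F (2*n) ((X-1)^2 * minpoly F β)) (hc0 : c ≠ 0) :
    3 ≤ c.support.card := by
  rw [mem_cyclicCode hdvd] at hcC
  obtain ⟨hcdeg, r, hcr⟩ := hcC
  have h2F : (2 : F) = 0 := by
    have := CharP.cast_eq_zero F 2; exact_mod_cast this
  have hsq : ((X : Polynomial F) - 1) ^ 2 = X ^ 2 - 1 := by
    rw [sub_pow_char]; simp
  have heval1 : c.eval 1 = 0 := by rw [hcr, hsq]; simp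
  have hderiv : (derivative c).eval 1 = 0 := by
    rw [hcr, hsq, mul_assoc, derivative_mul]
    simp [h2F]
    left; rw [one_add_one_eq_two]; exact h2F
  have haeval : aeval β c = 0 := by
    rw [hcr]
    simp [mul_assoc, minpoly.aeval]
  have hsupp_lt : ∀ k ∈ c.support, k < 2 * n := by
    intro k hk
    have h1 : k ≤ c.natDegree := le_natDegree_of_mem_supp k hk
    have h2 : c.natDegree < 2 * n := (Polynomial.natDegree_lt_iff_degree_lt hc0).2 hcdeg
    omega
  have hβ0 : β ≠ 0 := by
    intro h0
    have := hβ.pow_eq_one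
    rw [h0, zero_pow hn0.ne'] at this
    exact zero_ne_one this
  have key : ∀ i j : ℕ, i < j → j < 2 * n → 2 ∣ i + j → β ^ i = β ^ j → False := by
    intro i j hij hj2n hpar heq
    have hβji : β ^ (j - i) = 1 := by
      have h1 : β ^ (j - i) * β ^ i = β ^ j := by
        rw [← pow_add]; congr 1; omega
      rw [← heq] at h1
      have := mul_right_cancel₀ (pow_ne_zero i hβ0) (h1.trans (one_mul (β ^ i)).symm)
      exact this
    have hn_dvd : n ∣ j - i := (hβ.pow_eq_one_iff_dvd _).1 hβji
    have h2_dvd : 2 ∣ j - i := by omega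
    have hcop : Nat.Coprime 2 n := (Nat.Prime.coprime_iff_not_dvd Nat.prime_two).2 hnodd
    have h2n_dvd : 2 * n ∣ j - i := Nat.Coprime.mul_dvd_of_dvd_of_dvd hcop h2_dvd hn_dvd
    have : 2 * n ≤ j - i := Nat.le_of_dvd (by omega) h2n_dvd
    omega
  by_contra hlt
  push_neg at hlt
  interval_cases hcard : c.support.card
  · exact hc0 (Polynomial.support_eq_empty.1 (Finset.card_eq_zero.1 hcard))
  · obtain ⟨i, hi⟩ := Finset.card_eq_one.1 hcard
    have hci : c.coeff i ≠ 0 := by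
      rw [← Polynomial.mem_support_iff, hi]; simp
    rw [Polynomial.eval_eq_sum, Polynomial.sum_def, hi, Finset.sum_singleton] at heval1
    simp at heval1
    exact hci heval1
  · obtain ⟨i, j, hij, hsupp⟩ := Finset.card_eq_two.1 hcard
    have hci : c.coeff i ≠ 0 := by rw [← Polynomial.mem_support_iff, hsupp]; simp
    have hcj : c.coeff j ≠ 0 := by rw [← Polynomial.mem_support_iff, hsupp]; simp
    have hi2n : i < 2 * n := hsupp_lt i (by rw [hsupp]; simp)
    have hj2n : j < 2 * n := hsupp_lt j (by rw [hsupp]; simp)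
    rw [Polynomial.eval_eq_sum, Polynomial.sum_def, hsupp, Finset.sum_pair hij] at heval1
    simp only [one_pow, mul_one] at heval1
    have hba : c.coeff j = c.coeff i := by
      have h5 : c.coeff j = -c.coeff i := eq_neg_of_add_eq_zero_right heval1
      rw [h5, CharTwo.neg_eq]
    rw [Polynomial.derivative_apply, Polynomial.sum_def, hsupp, Finset.sum_pair hij] at hderiv
    simp only [Polynomial.eval_add, Polynomial.eval_mul, Polynomial.eval_C,
      Polynomial.eval_pow, Polynomial.eval_X, one_pow, mul_one] at hderiv
    have hparF : ((i : F) + (j : F)) = 0 := by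
      rw [hba] at hderiv
      have h3 : c.coeff i * ((i : F) + (j : F)) = 0 := by rw [mul_add]; exact hderiv
      rcases mul_eq_zero.1 h3 with h | h
      · exact absurd h hci
      · exact h
    have hpar : 2 ∣ i + j := by
      have : ((i + j : ℕ) : F) = 0 := by push_cast; exact hparF
      exact (CharP.cast_eq_zero_iff F 2 _).1 this
    rw [Polynomial.aeval_def, Polynomial.eval₂_eq_sum, Polynomial.sum_def, hsupp,
      Finset.sum_pair hij] at haeval
    have hβij : β ^ i = β ^ j := by
      rw [hba] at haeval
      have hmapne : algebraMap F K (c.coeff i) ≠ 0 := by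
        simpa using hci
      have h4 : algebraMap F K (c.coeff i) * (β ^ i + β ^ j) = 0 := by
        rw [mul_add]; exact haeval
      rcases mul_eq_zero.1 h4 with h | h
      · exact absurd h hmapne
      · have : β ^ i = -β ^ j := eq_neg_of_add_eq_zero_left h
        rw [this, CharTwo.neg_eq]
    rcases hij.lt_or_gt with hlt' | hlt'
    · exact key i j hlt' hj2n hpar hβij
    · exact key j i hlt' hi2n (by omega) hβij.symm

theorem weight3_exists [Fintype F] [Fintype K] [CharP F 2] [CharP K 2] {β : K} {n : ℕ}
    (hn0 : 0 < n) (hcard : Fintype.card K - 1 = n) (hcardF : 3 ≤ Fintype.card F)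
    (hFK : Fintype.card F < Fintype.card K)
    (hβ : IsPrimitiveRoot β n) (hint : IsIntegral F β) (hm2 : 2 ≤ (minpoly F β).natDegree)
    (hdvd : ((X : Polynomial F) - 1) ^ 2 * minpoly F β ∣ X ^ (2 * n) - 1) :
    ∃ c : Polynomial F, c ∈ cyclicCode F (2*n) ((X-1)^2 * minpoly F β) ∧ c ≠ 0 ∧
      c.support.card = 3 := by
  classical
  obtain ⟨u, hu⟩ : ∃ u : F, u ∉ ({0, 1} : Finset F) := by
    by_contra hco
    push_neg at hco
    have : (Finset.univ : Finset F) ⊆ {0, 1} := fun x _ => hco x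
    have := Finset.card_le_card this
    simp only [Finset.card_univ] at this
    have h01 : ({0, 1} : Finset F).card ≤ 2 := Finset.card_insert_le _ _ |>.trans (by simp)
    omega
  simp only [Finset.mem_insert, Finset.mem_singleton, not_or] at hu
  obtain ⟨hu0, hu1⟩ := hu
  set v : F := 1 + u with hv
  have hv0 : v ≠ 0 := by
    intro h
    apply hu1
    have : u = -1 := by rw [hv] at h; linear_combination h
    rw [this, CharTwo.neg_eq]
  obtain ⟨δ, hδ⟩ : ∃ δ : K, δ ∉ Set.range (algebraMap F K) := by
    by_contra hco
    push_neg at hco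
    have hsurj : Function.Surjective (algebraMap F K) := fun x => hco x
    have := Fintype.card_le_of_surjective _ hsurj
    omega
  have hδ0 : δ ≠ 0 := fun h => hδ ⟨0, by simp [h]⟩
  have hδ1 : δ ≠ 1 := fun h => hδ ⟨1, by simp [h]⟩
  set ε : K := (δ + algebraMap F K v) / algebraMap F K u with hε
  have humap : algebraMap F K u ≠ 0 := by simpa using hu0
  have hε_not : ε ∉ Set.range (algebraMap F K) := by
    intro ⟨a, ha⟩
    apply hδ
    refine ⟨a * u - v, ?_⟩
    have h6 : δ + algebraMap F K v = algebraMap F K a * algebraMap F K u := by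
      rw [hε] at ha
      field_simp at ha
      exact ha.symm
    rw [map_sub, map_mul, ha]
    rw [hε]
    field_simp
    ring
  have hε0 : ε ≠ 0 := fun h => hε_not ⟨0, by simp [h]⟩
  have hδε : δ ≠ ε := by
    intro h
    have h7 : δ * algebraMap F K u = δ + algebraMap F K v := by
      rw [hε] at h
      field_simp at h
      exact h
    have h8 : (δ - 1) * (algebraMap F K u - 1) = 0 := by
      have hvu : algebraMap F K v = algebraMap F K u + 1 := by
        rw [hv, map_add, map_one, add_comm]
      rw [hvu] at h7
      have h2K : (2 : K) = 0 := by exact_mod_cast CharP.cast_eq_zero K 2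
      linear_combination h7 + h2K
    rcases mul_eq_zero.1 h8 with h9 | h9
    · exact hδ1 (by linear_combination h9)
    · apply hu1
      have : algebraMap F K u = algebraMap F K 1 := by rw [map_one]; linear_combination h9
      exact (algebraMap F K).injective this
  obtain ⟨s, hsn, hs⟩ := pow_surj_of_primitive hn0 hcard hβ δ hδ0
  obtain ⟨t, htn, ht⟩ := pow_surj_of_primitive hn0 hcard hβ ε hε0
  have hs0 : s ≠ 0 := by
    intro h; rw [h, pow_zero] at hs; exact hδ1 hs.symm
  have ht0 : t ≠ 0 := by
    intro h; rw [h, pow_zero] at ht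
    exact hε_not ⟨1, by rw [map_one, ht]⟩
  have hst : s ≠ t := by
    intro h; rw [h, ht] at hs; exact hδε hs.symm
  set h : Polynomial F := X ^ s + C u * X ^ t + C v with hdef
  set c : Polynomial F := h ^ 2 with hcdef
  have h2F : (2 : F) = 0 := by exact_mod_cast CharP.cast_eq_zero F 2
  have hc_expand : c = X ^ (s * 2) + C (u ^ 2) * X ^ (t * 2) + C (v ^ 2) := by
    rw [hcdef, hdef, add_pow_char, add_pow_char, mul_pow, ← map_pow, ← map_pow, pow_mul, pow_mul]
  have hu2 : u ^ 2 ≠ 0 := pow_ne_zero _ hu0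
  have hv2 : v ^ 2 ≠ 0 := pow_ne_zero _ hv0
  have hsupp : c.support = {0, s * 2, t * 2} ∨ c.support = {0, t * 2, s * 2} := by
    rcases (Ne.lt_or_gt hst) with hlt | hlt
    · left
      have hform : c = C (v ^ 2) * X ^ 0 + C 1 * X ^ (s * 2) + C (u ^ 2) * X ^ (t * 2) := by
        rw [hc_expand, map_one]; ring
      rw [hform, support_trinomial (by omega) (by omega) hv2 one_ne_zero hu2]
    · right
      have hform : c = C (v ^ 2) * X ^ 0 + C (u ^ 2) * X ^ (t * 2) + C 1 * X ^ (s * 2) := by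
        rw [hc_expand, map_one]; ring
      rw [hform, support_trinomial (by omega) (by omega) hv2 hu2 one_ne_zero]
  have hsupp_card : c.support.card = 3 := by
    rcases hsupp with h' | h' <;> rw [h'] <;>
      · rw [Finset.card_insert_of_notMem, Finset.card_insert_of_notMem] <;> simp <;> omega
  have hc0 : c ≠ 0 := by
    intro h'
    rw [h'] at hsupp_card
    simp at hsupp_card
  have hdeg : c.degree < (2 * n : ℕ) := by
    rw [Polynomial.degree_lt_iff_coeff_zero]
    intro k hk
    have hk' : (2 * n : ℕ) ≤ k := by exact_mod_cast hk
    rw [← Polynomial.notMem_support_iff]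
    intro hmem
    rcases hsupp with h' | h' <;> rw [h'] at hmem <;> simp at hmem <;> omega
  have hX1h : (X - C 1 : Polynomial F) ∣ h := by
    rw [dvd_iff_isRoot]
    show h.eval 1 = 0
    rw [hdef]
    simp [hv]
    linear_combination (1 + u) * h2F
  have hmh : minpoly F β ∣ h := by
    apply minpoly.dvd
    rw [hdef]
    have h2K : (2 : K) = 0 := by exact_mod_cast CharP.cast_eq_zero K 2
    have huε : algebraMap F K u * ε = δ + algebraMap F K v := by
      rw [hε]; field_simp
    simp only [map_add, map_mul, map_pow, aeval_X, aeval_C, hs, ht]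
    linear_combination huε + h2K * δ + h2K * (algebraMap F K v)
  obtain ⟨r, hr⟩ := hX1h
  have hprime : Prime (minpoly F β) := (minpoly.irreducible hint).prime
  have hmr : minpoly F β ∣ r := by
    rw [hr] at hmh
    rcases hprime.2.2 _ _ hmh with h1 | h2
    · exfalso
      have hne : (X - C 1 : Polynomial F) ≠ 0 := Polynomial.X_sub_C_ne_zero 1
      have hle : (minpoly F β).natDegree ≤ (X - C 1 : Polynomial F).natDegree :=
        Polynomial.natDegree_le_of_dvd h1 hne
      rw [Polynomial.natDegree_X_sub_C] at hle
      omega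
    · exact h2
  obtain ⟨w, hw⟩ := hmr
  have hgc : ((X : Polynomial F) - 1) ^ 2 * minpoly F β ∣ c := by
    refine ⟨minpoly F β * w ^ 2, ?_⟩
    rw [hcdef, hr, hw]
    have : (C 1 : Polynomial F) = 1 := map_one C
    rw [this]
    ring
  exact ⟨c, (mem_cyclicCode hdvd).2 ⟨hdeg, hgc⟩, hc0, hsupp_card⟩

theorem packing_bound [Fintype F] [DecidableEq F] {M : ℕ} (D : Set (Fin M → F))
    (hD : ∀ u ∈ D, ∀ v ∈ D, u ≠ v → 3 ≤ hammingDist u v) :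
    Nat.card D * (1 + M * (Fintype.card F - 1)) ≤ Fintype.card F ^ M := by
  classical
  set B : (Fin M → F) → Finset (Fin M → F) :=
    fun w => Finset.univ.filter (fun x => hammingDist x w ≤ 1) with hB
  have hball_card : ∀ w : Fin M → F, 1 + M * (Fintype.card F - 1) ≤ (B w).card := by
    intro w
    set e : Fin M × {a : F // a ≠ 0} → (Fin M → F) :=
      fun p => Function.update w p.1 (w p.1 + p.2.1) with he
    have heinj : Function.Injective e := by
      rintro ⟨i, a, ha⟩ ⟨j, b, hb⟩ hab
      simp only [he] at hab
      by_cases hij : i = j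
      · subst hij
        have := congrFun hab i
        simp only [Function.update_self] at this
        have : (a : F) = b := by
          have h2 := add_left_cancel this
          exact h2
        simp [this]
      · exfalso
        have h1 := congrFun hab i
        have h2 := congrFun hab j
        rw [Function.update_self, Function.update_of_ne hij] at h1
        rw [Function.update_of_ne (Ne.symm hij), Function.update_self] at h2
        exact ha (by linear_combination h1)
    set S : Finset (Fin M → F) := insert w (Finset.univ.image e) with hS
    have hsub : S ⊆ B w := by
      intro x hx
      rw [hS, Finset.mem_insert] at hx
      rw [hB, Finset.mem_filter]
      refine ⟨Finset.mem_univ _, ?_⟩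
      rcases hx with rfl | hx
      · simp [hammingDist_self]
      · obtain ⟨⟨i, a⟩, _, rfl⟩ := Finset.mem_image.1 hx
        have : hammingDist (e (i, a)) w ≤ 1 := by
          apply le_trans (Finset.card_le_card _) (Finset.card_singleton i).le
          intro j hj
          simp only [hammingDist, Finset.mem_filter] at hj
          rw [Finset.mem_singleton]
          by_contra hji
          exact hj.2 (by rw [he]; simp [Function.update_of_ne hji])
        exact this
    have hScard : S.card = 1 + M * (Fintype.card F - 1) := by
      rw [hS, Finset.card_insert_of_notMem, Finset.card_image_of_injective _ heinj]
      · have hcc : Fintype.card {a : F // a ≠ 0} = Fintype.card F - 1 := by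
          rw [Fintype.card_subtype_compl, Fintype.card_subtype_eq]
        rw [Finset.card_univ, Fintype.card_prod, Fintype.card_fin, hcc, Nat.add_comm]
      · rw [Finset.mem_image]
        rintro ⟨⟨i, a, ha⟩, _, hfa⟩
        have := congrFun hfa i
        simp only [he, Function.update_self] at this
        exact ha (by linear_combination this)
    calc 1 + M * (Fintype.card F - 1) = S.card := hScard.symm
    _ ≤ (B w).card := Finset.card_le_card hsub
  have hDfin : D.Finite := Set.toFinite D
  set Df : Finset (Fin M → F) := hDfin.toFinset with hDf
  have hdisj : ∀ u ∈ Df, ∀ v ∈ Df, u ≠ v → Disjoint (B u) (B v) := by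
    intro u hu v hv huv
    rw [Finset.disjoint_left]
    intro x hxu hxv
    rw [hB, Finset.mem_filter] at hxu hxv
    have h3 : (3 : ℕ) ≤ hammingDist u v := by
      apply hD u (by simpa [hDf] using hu) v (by simpa [hDf] using hv) huv
    have : hammingDist u v ≤ 2 := by
      calc hammingDist u v ≤ hammingDist u x + hammingDist x v := hammingDist_triangle u x v
      _ ≤ 1 + 1 := add_le_add (by rw [hammingDist_comm]; exact hxu.2) hxv.2
      _ = 2 := rfl
    omega
  have hcount : Df.card * (1 + M * (Fintype.card F - 1)) ≤ Fintype.card F ^ M := by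
    calc Df.card * (1 + M * (Fintype.card F - 1)) = ∑ w ∈ Df, (1 + M * (Fintype.card F - 1)) := by
          rw [Finset.sum_const, smul_eq_mul]
    _ ≤ ∑ w ∈ Df, (B w).card := Finset.sum_le_sum fun w _ => hball_card w
    _ = (Df.biUnion B).card := (Finset.card_biUnion hdisj).symm
    _ ≤ (Finset.univ : Finset (Fin M → F)).card := Finset.card_le_card (Finset.subset_univ _)
    _ = Fintype.card F ^ M := by rw [Finset.card_univ, Fintype.card_fun, Fintype.card_fin]
  have : Nat.card D = Df.card := by
    rw [Nat.card_eq_card_finite_toFinset hDfin]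
  rw [this]
  exact hcount

theorem dist4_bound [Fintype F] [DecidableEq F] {M : ℕ} (D : Set (Fin (M + 1) → F))
    (hD : ∀ u ∈ D, ∀ v ∈ D, u ≠ v → 4 ≤ hammingDist u v) :
    Nat.card D * (1 + M * (Fintype.card F - 1)) ≤ Fintype.card F ^ M := by
  classical
  set π : (Fin (M + 1) → F) → (Fin M → F) := fun u => u ∘ Fin.castSucc with hπ
  have hdist : ∀ u v : Fin (M + 1) → F, hammingDist u v ≤ hammingDist (π u) (π v) + 1 := by
    intro u v
    have h1 : hammingDist u v = (Finset.univ.filter fun i => u i ≠ v i).card := rfl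
    have h2 : hammingDist (π u) (π v) =
        (Finset.univ.filter fun j : Fin M => u (Fin.castSucc j) ≠ v (Fin.castSucc j)).card := rfl
    rw [h1, h2]
    have hsub : (Finset.univ.filter fun i => u i ≠ v i) ⊆
        insert (Fin.last M)
          ((Finset.univ.filter fun j : Fin M =>
            u (Fin.castSucc j) ≠ v (Fin.castSucc j)).image Fin.castSucc) := by
      intro i hi
      rw [Finset.mem_filter] at hi
      rw [Finset.mem_insert]
      by_cases hil : i = Fin.last M
      · exact Or.inl hil
      · right
        obtain ⟨j, rfl⟩ := Fin.exists_castSucc_eq.2 hil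
        exact Finset.mem_image_of_mem _ (Finset.mem_filter.2 ⟨Finset.mem_univ _, hi.2⟩)
    calc (Finset.univ.filter fun i => u i ≠ v i).card ≤ _ := Finset.card_le_card hsub
    _ ≤ ((Finset.univ.filter fun j : Fin M =>
            u (Fin.castSucc j) ≠ v (Fin.castSucc j)).image Fin.castSucc).card + 1 :=
        Finset.card_insert_le _ _
    _ ≤ _ := by
        gcongr
        exact Finset.card_image_le
  have hinj : Set.InjOn π D := by
    intro u hu v hv huv
    by_contra hne
    have h4 := hD u hu v hv hne
    have := hdist u v
    rw [huv, hammingDist_self] at this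
    omega
  have hD' : ∀ u' ∈ π '' D, ∀ v' ∈ π '' D, u' ≠ v' → 3 ≤ hammingDist u' v' := by
    rintro _ ⟨u, hu, rfl⟩ _ ⟨v, hv, rfl⟩ hne
    have hdne : u ≠ v := fun h => hne (by rw [h])
    have := hD u hu v hv hdne
    have h2 := hdist u v
    omega
  have hcard : Nat.card (π '' D) = Nat.card D := Nat.card_image_of_injOn hinj
  have := packing_bound (π '' D) hD'
  rw [hcard] at this
  exact this

theorem dist4_bound' [Fintype F] [DecidableEq F] {L : ℕ} (hL : 0 < L)
    (D : Set (Fin L → F))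
    (hD : ∀ u ∈ D, ∀ v ∈ D, u ≠ v → 4 ≤ hammingDist u v) :
    Nat.card D * (1 + (L - 1) * (Fintype.card F - 1)) ≤ Fintype.card F ^ (L - 1) := by
  obtain ⟨M, rfl⟩ : ∃ M, L = M + 1 := ⟨L - 1, by omega⟩
  simpa using dist4_bound D hD

theorem arith_bound {q m : ℕ} (hq4 : 4 ≤ q) (hm : 2 ≤ m) :
    q ^ (m + 1) < 1 + (2 * (q ^ m - 1) - 1) * (q - 1) := by
  have haq : q * q ≤ q ^ m := by
    calc q * q = q ^ 2 := (sq q).symm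
    _ ≤ q ^ m := Nat.pow_le_pow_right (by omega) hm
  have h16 : 16 ≤ q ^ m := le_trans (by nlinarith) haq
  rw [pow_succ]
  zify [show 1 ≤ q ^ m by omega, show 1 ≤ 2 * (q ^ m - 1) by omega, show 1 ≤ q by omega]
  nlinarith [haq, h16, hq4]

end Helpers

/-- for `q ≥ 4` a power of `2`, `m ≥ 2`, `n = q^m - 1` and `β` a primitive
element of `F_{q^m}`, the repeated-root cyclic code of length `2n` over `F_q` with
generator polynomial `(x-1)^2 m_β(x)` has dimension `2(q^m - 1) - m - 2` and minimum
distance exactly `3`, and it is distance-optimal. -/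
theorem statement4 {F K : Type*} [Field F] [Fintype F] [Field K] [Fintype K] [Algebra F K]
    (q : ℕ) (hq : Fintype.card F = q) (hq2 : ∃ e : ℕ, q = 2 ^ e) (hq4 : 4 ≤ q)
    (m : ℕ) (hm : 2 ≤ m) (hK : Fintype.card K = q ^ m)
    (n : ℕ) (hn : n = q ^ m - 1)
    (β : K) (hβ : IsPrimitiveRoot β (q ^ m - 1)) :
    Module.finrank F (cyclicCode F (2 * n) ((X - 1) ^ 2 * minpoly F β)) =
      2 * (q ^ m - 1) - m - 2 ∧
    minDist (cyclicCode F (2 * n) ((X - 1) ^ 2 * minpoly F β)) = 3 ∧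
    ∀ D : Set (Fin (2 * n) → F),
      Nat.card D = Nat.card (cyclicCode F (2 * n) ((X - 1) ^ 2 * minpoly F β)) →
        setMinDist D ≤ 3 := by
  letI := Classical.decEq F
  subst hn
  -- numeric basics
  have h2q : 2 ∣ q := by
    obtain ⟨e, rfl⟩ := hq2
    have he : e ≠ 0 := by rintro rfl; simp at hq4
    exact dvd_pow_self 2 he
  have hq2le : 2 ≤ q := by omega
  have hqm16 : 16 ≤ q ^ m := by
    calc (16 : ℕ) = 4 ^ 2 := by norm_num
    _ ≤ q ^ 2 := Nat.pow_le_pow_left hq4 2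
    _ ≤ q ^ m := Nat.pow_le_pow_right (by omega) hm
  have hmlt : m < q ^ m := lt_of_lt_of_le (Nat.lt_two_pow_self) (Nat.pow_le_pow_left hq2le m)
  have hn0 : 0 < q ^ m - 1 := by omega
  -- characteristic 2
  haveI hF2 : CharP F 2 := by
    obtain ⟨k, hpprime, hcard⟩ := FiniteField.card F (ringChar F)
    obtain ⟨e, hqe⟩ := hq2
    have hdvd2 : ringChar F ∣ 2 ^ e := by
      rw [← hqe, ← hq, hcard]
      exact dvd_pow_self _ (by positivity)
    have : ringChar F = 2 :=
      (Nat.prime_dvd_prime_iff_eq hpprime Nat.prime_two).1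
        (hpprime.dvd_of_dvd_pow hdvd2)
    exact this ▸ ringChar.charP F
  haveI hK2 : CharP K 2 := charP_of_injective_algebraMap (algebraMap F K).injective 2
  haveI : Module.Finite F K := Module.finite_iff_finite.2 inferInstance
  have hint : IsIntegral F β := IsIntegral.of_finite F β
  have hcardK : Fintype.card K - 1 = q ^ m - 1 := by rw [hK]
  -- degree of minimal polynomial is m
  have hfr : Module.finrank F K = m := by
    have h1 := Module.card_eq_pow_finrank (K := F) (V := K)
    rw [hq, hK] at h1
    exact (Nat.pow_right_injective hq2le h1.symm)
  have htop : IntermediateField.adjoin F {β} = ⊤ := by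
    rw [eq_top_iff]
    intro x _
    rcases eq_or_ne x 0 with rfl | hx
    · exact zero_mem _
    · obtain ⟨i, _, rfl⟩ := pow_surj_of_primitive hn0 hcardK hβ x hx
      exact pow_mem (IntermediateField.subset_adjoin F {β} rfl) i
  have hmdeg : (minpoly F β).natDegree = m := by
    have h1 := IntermediateField.adjoin.finrank hint
    rw [htop, IntermediateField.finrank_top'] at h1
    rw [← h1, hfr]
  have hm2 : 2 ≤ (minpoly F β).natDegree := by omega
  have hnodd : ¬ 2 ∣ (q ^ m - 1) := by
    have : 2 ∣ q ^ m := dvd_pow h2q (by omega)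
    omega
  have hdvd : ((X : Polynomial F) - 1) ^ 2 * minpoly F β ∣ X ^ (2 * (q ^ m - 1)) - 1 :=
    gdvd hβ hint hm2
  have hg0 : ((X : Polynomial F) - 1) ^ 2 * minpoly F β ≠ 0 := by
    apply mul_ne_zero
    · apply pow_ne_zero
      simpa using Polynomial.X_sub_C_ne_zero (1 : F)
    · exact minpoly.ne_zero hint
  have hgdeg : (((X : Polynomial F) - 1) ^ 2 * minpoly F β).natDegree = m + 2 := by
    rw [Polynomial.natDegree_mul (pow_ne_zero _ (by simpa using Polynomial.X_sub_C_ne_zero (1 : F)))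
      (minpoly.ne_zero hint), Polynomial.natDegree_pow]
    have hx1 : ((X : Polynomial F) - 1).natDegree = 1 := by
      simpa using Polynomial.natDegree_X_sub_C (1 : F)
    rw [hx1, hmdeg]
    omega
  have hgle : (((X : Polynomial F) - 1) ^ 2 * minpoly F β).natDegree ≤ 2 * (q ^ m - 1) := by
    rw [hgdeg]; omega
  obtain ⟨c3, hc3C, hc30, hc3w⟩ :=
    weight3_exists hn0 hcardK (by omega) (by
      rw [hq, hK]
      calc q = q ^ 1 := (pow_one q).symm
      _ < q ^ m := Nat.pow_lt_pow_right (by omega) (by omega)) hβ hint hm2 hdvd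
  refine ⟨?_, ?_, ?_⟩
  · rw [finrank_cyclicCode hdvd hg0 hgle, hgdeg]
    omega
  · unfold minDist
    apply le_antisymm
    · exact Nat.sInf_le ⟨c3, hc3C, hc30, hc3w⟩
    · have hne : {w | ∃ c ∈ cyclicCode F (2 * (q ^ m - 1)) ((X - 1) ^ 2 * minpoly F β),
          c ≠ 0 ∧ c.support.card = w}.Nonempty := ⟨3, c3, hc3C, hc30, hc3w⟩
      apply le_csInf hne
      rintro w ⟨c, hcC, hc0, rfl⟩
      exact weight_lb hn0 hnodd hβ hdvd hcC hc0
  · intro D hDcard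
    by_contra hgt
    push_neg at hgt
    have hpair : ∀ u ∈ D, ∀ v ∈ D, u ≠ v → 4 ≤ hammingDist u v := by
      intro u hu v hv huv
      have hmem : hammingDist u v ∈
          {w | ∃ u' ∈ D, ∃ v' ∈ D, u' ≠ v' ∧ hammingDist u' v' = w} :=
        ⟨u, hu, v, hv, huv, rfl⟩
      have hle := Nat.sInf_le hmem
      unfold setMinDist at hgt
      omega
    have hC := card_cyclicCode hdvd hg0 hgle
    rw [hgdeg] at hC
    have hb := dist4_bound' (by omega : 0 < 2 * (q ^ m - 1)) D hpair
    rw [hDcard, hC, hq] at hb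
    have harith := arith_bound hq4 hm
    have hsplit : q ^ (2 * (q ^ m - 1) - 1) =
        q ^ (2 * (q ^ m - 1) - (m + 2)) * q ^ (m + 1) := by
      rw [← pow_add]; congr 1; omega
    have hqk : 0 < q ^ (2 * (q ^ m - 1) - (m + 2)) := pow_pos (by omega) _
    rw [hsplit] at hb
    have hmul : q ^ (2 * (q ^ m - 1) - (m + 2)) * q ^ (m + 1) <
        q ^ (2 * (q ^ m - 1) - (m + 2)) * (1 + (2 * (q ^ m - 1) - 1) * (q - 1)) :=
      mul_lt_mul_of_pos_left harith hqk
    omega
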